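/- arXiv:1403.7276 — 6 statements merged into one kernel-verified Lean document; each statement's English description precedes it below -/
import Mathlib

section
/- Let G be a finite abelian group with b = |G| elements, s, n positive integers, and P a subgroup of G^{s×n}. For a matrix A = (a_{ij}) in (G^∨)^{s×n} define the Dick weight μ(A) = ∑_{i=1}^{s} ∑_{j=1}^{n} j·δ(a_{ij}) where δ(0)=0 and δ(h)=1 for h≠0. Then the weight enumerator W_{P^⊥}(x,y) = ∑_{A ∈ P^⊥} x^{M-μ(A)} y^{μ(A)}, with M = n(n+1)s/2, satisfies the MacWilliams-type identity W_{P^⊥}(x,y) = (1/|P|) ∑_{B ∈ P} ∏_{i=1}^{s} ∏_{j=1}^{n} (x^j + η(b_{ij}) y^j), where η(0) = b-1 and η(g) = -1 for g ≠ 0. -/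
/-!
Each factor on the right is a character sum,
`x^w + η(g) y^w = ∑_χ χ(g) • (if χ = 1 then x^w else y^w)`, because `∑_χ χ(g)` is `b` or `0`
according as `g = 0` or not. Multiplying out over the entries turns the product for `B` into
`∑_A ψ_A(B) • x^(M - μ(A)) y^μ(A)` with the character `ψ_A(B) = ∏_{i,j} A_{ij}(B_{ij})` of
`G^{s×n}`. Averaging over `B ∈ P`, orthogonality of `ψ_A` restricted to `P` keeps exactly the
`A ∈ P^⊥`.
-/

open scoped Classical
open MvPolynomial

/-- The Dick weight `μ(A) = ∑_{i,j} j · δ(a_{ij})` of a matrix of characters,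
where column `j` (numbered `1, …, n`) contributes `j` for each nonzero entry. -/
noncomputable def dickWeight {G : Type*} [AddCommGroup G] {s n : ℕ}
    (A : Fin s → Fin n → AddChar G ℂ) : ℕ :=
  ∑ i : Fin s, ∑ j : Fin n, (j.1 + 1) * (if A i j = 1 then 0 else 1)

open Finset

namespace AddChar

variable {R : Type*} [CommMonoid R]

def piProd {ι : Type*} [Fintype ι] {G : ι → Type*} [∀ i, AddMonoid (G i)]
    (ψ : ∀ i, AddChar (G i) R) : AddChar (∀ i, G i) R where
  toFun g := ∏ i, ψ i (g i)
  map_zero_eq_one' := by simp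
  map_add_eq_mul' g h := by simp only [Pi.add_apply, map_add_eq_mul, prod_mul_distrib]

@[simp]
lemma piProd_apply {ι : Type*} [Fintype ι] {G : ι → Type*} [∀ i, AddMonoid (G i)]
    (ψ : ∀ i, AddChar (G i) R) (g : ∀ i, G i) : piProd ψ g = ∏ i, ψ i (g i) := rfl

lemma sum_addSubgroup_eq_ite {K S : Type*} [AddGroup K] [CommRing S] [IsDomain S]
    (ψ : AddChar K S) (P : AddSubgroup K) [Fintype P] :
    ∑ B : P, ψ B = if ∀ B ∈ P, ψ B = 1 then (Nat.card P : S) else 0 := by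
  have htriv : ψ.compAddMonoidHom P.subtype = 0 ↔ ∀ B ∈ P, ψ B = 1 := by
    simp [AddChar.ext_iff]
  simpa [htriv, Nat.card_eq_fintype_card] using sum_eq_ite (ψ.compAddMonoidHom P.subtype)

end AddChar

lemma inv_card_smul_sum_sum_smul_eq_finsum_annihilator {K α M : Type*} [AddGroup K]
    [Fintype α] [AddCommGroup M] [Module ℂ M] (P : AddSubgroup K) [Fintype P]
    (ψ : α → AddChar K ℂ) (m : α → M) :
    (Nat.card P : ℂ)⁻¹ • ∑ B : P, ∑ a, ψ a B • m a =
      ∑ᶠ a ∈ {a | ∀ B ∈ P, ψ a B = 1}, m a := by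
  rw [finsum_mem_eq_toFinset_sum, Set.toFinset_ofPred, sum_comm, smul_sum, sum_filter]
  refine sum_congr rfl fun a _ => ?_
  rw [← sum_smul, AddChar.sum_addSubgroup_eq_ite, smul_smul]
  split_ifs <;> simp

lemma sum_addChar_apply_smul_ite {G M : Type*} [AddCommGroup G] [Fintype G] [AddCommGroup M]
    [Module ℂ M] (g : G) (u v : M) :
    ∑ χ : AddChar G ℂ, χ g • (if χ = 1 then u else v) =
      u + (if g = 0 then (Fintype.card G : ℂ) - 1 else -1) • v := by
  have hsplit : ∀ χ : AddChar G ℂ,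
      χ g • (if χ = 1 then u else v) = χ g • v + if χ = 1 then u - v else 0 := by
    intro χ
    split_ifs with h
    · simp [h]
    · simp
  simp only [hsplit, sum_add_distrib, ← sum_smul, AddChar.sum_apply_eq_ite, sum_ite_eq',
    mem_univ, if_true]
  split_ifs <;> module

lemma prod_prod_add_smul_eq_sum_piProd_smul {ι κ G R : Type*} [Fintype ι] [DecidableEq ι]
    [Fintype κ] [DecidableEq κ] [AddCommGroup G] [Fintype G] [CommRing R] [Algebra ℂ R]
    (B : ι → κ → G) (u v : ι → κ → R) :
    ∏ i, ∏ j, (u i j + (if B i j = 0 then (Fintype.card G : ℂ) - 1 else -1) • v i j) =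
      ∑ A : ι → κ → AddChar G ℂ, AddChar.piProd (fun i => AddChar.piProd (A i)) B •
        ∏ i, ∏ j, (if A i j = 1 then u i j else v i j) := by
  simp only [← sum_addChar_apply_smul_ite, Fintype.prod_sum, prod_smul, AddChar.piProd_apply]

lemma prod_prod_ite_pow {ι κ M : Type*} [Fintype ι] [Fintype κ] [CommMonoid M]
    (p : ι → κ → Prop) (w : κ → ℕ) (x y : M) :
    ∏ i, ∏ j, (if p i j then x ^ w j else y ^ w j) =
      x ^ (∑ _i : ι, ∑ j, w j - ∑ i, ∑ j, w j * (if p i j then 0 else 1)) *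
        y ^ (∑ i, ∑ j, w j * (if p i j then 0 else 1)) := by
  have hentry : ∀ i j, (if p i j then x ^ w j else y ^ w j) =
      x ^ (w j - w j * (if p i j then 0 else 1)) * y ^ (w j * (if p i j then 0 else 1)) := by
    intro i j
    split_ifs <;> simp
  have hle : ∀ i j, w j * (if p i j then 0 else 1) ≤ w j := fun i j => by split_ifs <;> simp
  simp only [hentry, prod_mul_distrib, prod_pow_eq_pow_sum]
  rw [← sum_tsub_distrib _ fun i _ => sum_le_sum fun j _ => hle i j]
  simp only [sum_tsub_distrib _ fun j _ => hle _ j]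

lemma sum_sum_fin_val_add_one (s n : ℕ) :
    ∑ _i : Fin s, ∑ j : Fin n, (j.1 + 1) = n * (n + 1) * s / 2 := by
  have hgauss : (∑ j : Fin n, (j.1 + 1)) * 2 = n * (n + 1) := by
    have h := sum_range_id_mul_two (n + 1)
    rw [sum_range_succ'] at h
    simpa [Fin.sum_univ_eq_sum_range (· + 1), mul_comm] using h
  rw [sum_const, card_univ, Fintype.card_fin, smul_eq_mul,
    show n * (n + 1) * s = (s * ∑ j : Fin n, (j.1 + 1)) * 2 by rw [← hgauss]; ring,
    Nat.mul_div_cancel _ two_pos]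

theorem macwilliams_identity_dick_weight_general (G : Type*) [AddCommGroup G] [Fintype G]
    (b s n : ℕ) (hb : b = Fintype.card G)
    (P : AddSubgroup (Fin s → Fin n → G)) :
    (∑ᶠ A ∈ {A : Fin s → Fin n → AddChar G ℂ |
        ∀ B ∈ P, (∏ i : Fin s, ∏ j : Fin n, A i j (B i j)) = 1},
      (X 0 : MvPolynomial (Fin 2) ℂ) ^ (n * (n + 1) * s / 2 - dickWeight A) *
        (X 1) ^ dickWeight A) =
    C ((Nat.card P : ℂ))⁻¹ *
      ∑ B : P, ∏ i : Fin s, ∏ j : Fin n,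
        ((X 0 : MvPolynomial (Fin 2) ℂ) ^ (j.1 + 1) +
          C (if (B : Fin s → Fin n → G) i j = 0 then (b : ℂ) - 1 else -1) *
            (X 1) ^ (j.1 + 1)) := by
  subst hb
  simp only [C_mul', prod_prod_add_smul_eq_sum_piProd_smul]
  rw [inv_card_smul_sum_sum_smul_eq_finsum_annihilator]
  simp only [AddChar.piProd_apply, prod_prod_ite_pow, sum_sum_fin_val_add_one, dickWeight]

/-- **MacWilliams-type identity for the Dick weight.**  For a subgroup
`P ⊆ G^{s×n}` of matrices over a finite abelian group `G` with `b = |G|` elements,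
the weight enumerator `W_{P^⊥}(x,y) = ∑_{A ∈ P^⊥} x^{M-μ(A)} y^{μ(A)}`
(with `M = n(n+1)s/2`) equals
`(1/|P|) ∑_{B ∈ P} ∏_{i,j} (x^j + η(b_{ij}) y^j)`, where `η(0) = b-1` and `η(g) = -1`
for `g ≠ 0`.  Here `x = X 0`, `y = X 1` in `ℂ[x,y]`. -/
theorem macwilliams_identity_dick_weight (G : Type*) [AddCommGroup G] [Fintype G]
    (b s n : ℕ) (hb : b = Fintype.card G) (hs : 0 < s) (hn : 0 < n)
    (P : AddSubgroup (Fin s → Fin n → G)) :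
    (∑ᶠ A ∈ {A : Fin s → Fin n → AddChar G ℂ |
        ∀ B ∈ P, (∏ i : Fin s, ∏ j : Fin n, A i j (B i j)) = 1},
      (X 0 : MvPolynomial (Fin 2) ℂ) ^ (n * (n + 1) * s / 2 - dickWeight A) *
        (X 1) ^ dickWeight A) =
    C ((Nat.card P : ℂ))⁻¹ *
      ∑ B : P, ∏ i : Fin s, ∏ j : Fin n,
        ((X 0 : MvPolynomial (Fin 2) ℂ) ^ (j.1 + 1) +
          C (if (B : Fin s → Fin n → G) i j = 0 then (b : ℂ) - 1 else -1) *
            (X 1) ^ (j.1 + 1)) :=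
  macwilliams_identity_dick_weight_general G b s n hb P
end

section
/- Let G be a finite abelian group with b elements and P ⊆ ℤ_b^{s×n} a subgroup. Define WAFOM(P) = ∑_{A ∈ P^⊥ \ {O}} b^{-μ(A)}, where μ is the Dick weight. Then WAFOM(P) = -1 + (1/|P|) ∑_{B ∈ P} ∏_{i=1}^{s} ∏_{j=1}^{n} (1 + η(b_{ij}) b^{-j}), where η(0) = b-1 and η(g) = -1 for g ≠ 0. -/
open scoped Classical
open Complex

/-- The Dick weight `μ(A) = ∑_{i,j} j · δ(a_{ij})` of a matrix over `ℤ_b`,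
where column `j` (numbered `1, …, n`) contributes `j` for each nonzero entry. -/
def dickWeightZMod {b s n : ℕ} (A : Fin s → Fin n → ZMod b) : ℕ :=
  ∑ i : Fin s, ∑ j : Fin n, (j.1 + 1) * (if A i j = 0 then 0 else 1)

/-- The pairing `h • g = exp(2πi·hg/b)` on `ℤ_b`, extended componentwise
(multiplicatively) to matrices. -/
noncomputable def zmodMatrixPairing {b s n : ℕ} (A B : Fin s → Fin n → ZMod b) : ℂ :=
  ∏ i : Fin s, ∏ j : Fin n,
    Complex.exp (2 * Real.pi * I * ((A i j).val * (B i j).val) / b)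

/-! For fixed `B`, the weight `A ↦ b^{-μ(A)}` is a product over the entries, so its Fourier
transform `∑_A ⟨A, B⟩ b^{-μ(A)}` factors into one-entry sums
`∑_a ψ(a b_{ij}) b^{-j δ(a)} = 1 + η(b_{ij}) b^{-j}` (orthogonality of `ψ = ZMod.stdAddChar`).
Summing over `B ∈ P` and exchanging the sums, `∑_{B ∈ P} ⟨A, B⟩` is `|P|` for `A ∈ P^⊥` and `0`
otherwise, so the right-hand side becomes `1 + WAFOM(P)`, the `1` being the term `A = O`. -/

open Finset

lemma AddChar.sum_addSubgroup_eq_ite_s5 {G R : Type*} [AddGroup G] [CommSemiring R] [IsDomain R]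
    (ψ : AddChar G R) (P : AddSubgroup G) [Fintype P] [Decidable (∀ x ∈ P, ψ x = 1)] :
    ∑ x : P, ψ x = if ∀ x ∈ P, ψ x = 1 then (Nat.card P : R) else 0 := by
  classical
  have h := sum_eq_ite (ψ.compAddMonoidHom P.subtype)
  simp only [compAddMonoidHom_apply, AddSubgroup.coe_subtype, eq_zero_iff, Subtype.forall] at h
  rw [h, Nat.card_eq_fintype_card]

lemma Fintype.prod_prod_sum {ι κ α R : Type*} [Fintype ι] [DecidableEq ι] [Fintype κ]
    [DecidableEq κ] [Fintype α] [CommSemiring R] (f : ι → κ → α → R) :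
    ∏ i, ∏ j, ∑ a, f i j a = ∑ A : ι → κ → α, ∏ i, ∏ j, f i j (A i j) := by
  simp_rw [Fintype.prod_sum]

lemma AddChar.sum_mulShift_mul_ite {R R' : Type*} [CommRing R] [Fintype R] [DecidableEq R]
    [CommRing R'] [IsDomain R'] {ψ : AddChar R R'} (hψ : ψ.IsPrimitive) (g : R) (c : R') :
    ∑ a, ψ (a * g) * (if a = 0 then 1 else c) =
      1 + (if g = 0 then (Fintype.card R : R') - 1 else -1) * c := by
  have hsplit : ∀ a, ψ (a * g) * (if a = 0 then 1 else c) =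
      c * ψ (a * g) + if a = 0 then 1 - c else 0 := by
    intro a
    split_ifs with ha
    · simp [ha]
    · ring
  rw [sum_congr rfl fun a _ => hsplit a, sum_add_distrib, ← mul_sum, sum_mulShift g hψ,
    sum_ite_eq' univ (0 : R), if_pos (mem_univ _)]
  split_ifs <;> ring

section
variable {b s n : ℕ}

@[simp]
lemma dickWeightZMod_zero : dickWeightZMod (0 : Fin s → Fin n → ZMod b) = 0 := by
  simp [dickWeightZMod]

@[simp]
lemma zmodMatrixPairing_zero_left (B : Fin s → Fin n → ZMod b) : zmodMatrixPairing 0 B = 1 := by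
  simp [zmodMatrixPairing]

lemma inv_pow_dickWeightZMod {M : Type*} [DivisionCommMonoid M] (x : M)
    (A : Fin s → Fin n → ZMod b) :
    (x ^ dickWeightZMod A)⁻¹ = ∏ i, ∏ j, if A i j = 0 then 1 else (x ^ (j.1 + 1))⁻¹ := by
  simp only [dickWeightZMod, ← prod_pow_eq_pow_sum, ← prod_inv_distrib, mul_ite, mul_zero,
    mul_one, pow_ite, pow_zero, apply_ite Inv.inv, inv_one]

variable [NeZero b]

lemma zmodMatrixPairing_eq_prod_stdAddChar (A B : Fin s → Fin n → ZMod b) :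
    zmodMatrixPairing A B = ∏ i, ∏ j, ZMod.stdAddChar (A i j * B i j) := by
  refine prod_congr rfl fun i _ => prod_congr rfl fun j _ => ?_
  have hval : A i j * B i j = (((A i j).val * (B i j).val : ℕ) : ℤ) := by simp
  rw [hval, ZMod.stdAddChar_coe]
  push_cast
  rfl

noncomputable def zmodMatrixPairingChar (A : Fin s → Fin n → ZMod b) :
    AddChar (Fin s → Fin n → ZMod b) ℂ where
  toFun := zmodMatrixPairing A
  map_zero_eq_one' := by simp [zmodMatrixPairing_eq_prod_stdAddChar]
  map_add_eq_mul' B C := by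
    simp only [zmodMatrixPairing_eq_prod_stdAddChar, Pi.add_apply, mul_add,
      AddChar.map_add_eq_mul, prod_mul_distrib]

@[simp]
lemma zmodMatrixPairingChar_apply (A B : Fin s → Fin n → ZMod b) :
    zmodMatrixPairingChar A B = zmodMatrixPairing A B := rfl

lemma sum_addSubgroup_sum_zmodMatrixPairing_mul (P : AddSubgroup (Fin s → Fin n → ZMod b))
    (w : (Fin s → Fin n → ZMod b) → ℂ) :
    ∑ B : P, ∑ A, zmodMatrixPairing A B * w A =
      Nat.card P * ∑ A with ∀ B ∈ P, zmodMatrixPairing A B = 1, w A := by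
  rw [sum_comm, mul_sum, sum_filter]
  refine sum_congr rfl fun A _ => ?_
  simp only [← zmodMatrixPairingChar_apply]
  rw [← sum_mul, AddChar.sum_addSubgroup_eq_ite_s5, ite_mul, zero_mul]
  -- the two sides differ only in their `Decidable` instances
  congr

lemma sum_zmodMatrixPairing_mul_inv_pow_dickWeightZMod (B : Fin s → Fin n → ZMod b) :
    ∑ A, zmodMatrixPairing A B * ((b : ℂ) ^ dickWeightZMod A)⁻¹ =
      ∏ i, ∏ j, (1 + (if B i j = 0 then (b : ℂ) - 1 else -1) * ((b : ℂ) ^ (j.1 + 1))⁻¹) := by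
  simp only [zmodMatrixPairing_eq_prod_stdAddChar, inv_pow_dickWeightZMod, ← prod_mul_distrib]
  rw [← Fintype.prod_prod_sum fun i j a =>
    ZMod.stdAddChar (a * B i j) * if a = 0 then 1 else ((b : ℂ) ^ (j.1 + 1))⁻¹]
  simp only [AddChar.sum_mulShift_mul_ite (ZMod.isPrimitive_stdAddChar b), ZMod.card]

end

theorem wafom_inversion_formula_general (b s n : ℕ) [NeZero b]
    (P : AddSubgroup (Fin s → Fin n → ZMod b)) :
    (∑ᶠ A ∈ {A : Fin s → Fin n → ZMod b |
        (∀ B ∈ P, zmodMatrixPairing A B = 1) ∧ A ≠ 0},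
      ((b : ℝ) ^ dickWeightZMod A)⁻¹) =
    -1 + (Nat.card P : ℝ)⁻¹ *
      ∑ B : P, ∏ i : Fin s, ∏ j : Fin n,
        (1 + (if (B : Fin s → Fin n → ZMod b) i j = 0 then (b : ℝ) - 1 else -1) *
          ((b : ℝ) ^ (j.1 + 1))⁻¹) := by
  have hdual : ∑ B : P, ∏ i : Fin s, ∏ j : Fin n,
      (1 + (if (B : Fin s → Fin n → ZMod b) i j = 0 then (b : ℂ) - 1 else -1) *
        ((b : ℂ) ^ (j.1 + 1))⁻¹) =
      Nat.card P * (1 + ∑ A with (∀ B ∈ P, zmodMatrixPairing A B = 1) ∧ A ≠ 0,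
        ((b : ℂ) ^ dickWeightZMod A)⁻¹) := by
    simp_rw [← sum_zmodMatrixPairing_mul_inv_pow_dickWeightZMod]
    rw [sum_addSubgroup_sum_zmodMatrixPairing_mul, ← filter_filter, filter_ne',
      ← add_sum_erase _ _ (a := 0) (by simp), dickWeightZMod_zero, pow_zero, inv_one]
  have hcard : (Nat.card P : ℂ) ≠ 0 := by exact_mod_cast Nat.card_pos.ne'
  rw [finsum_mem_eq_toFinset_sum, Set.toFinset_ofPred]
  apply Complex.ofReal_injective
  push_cast [apply_ite]
  rw [hdual, inv_mul_cancel_left₀ hcard]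
  ring

/-- **Inversion formula for WAFOM.** For a subgroup `P ⊆ ℤ_b^{s×n}`,
`WAFOM(P) = ∑_{A ∈ P^⊥ \ {O}} b^{-μ(A)}` equals
`-1 + (1/|P|) ∑_{B ∈ P} ∏_{i,j} (1 + η(b_{ij}) b^{-j})`, where `η(0) = b-1` and
`η(g) = -1` for `g ≠ 0`. -/
theorem wafom_inversion_formula (b s n : ℕ) [NeZero b] (hb : 2 ≤ b)
    (hs : 0 < s) (hn : 0 < n) (P : AddSubgroup (Fin s → Fin n → ZMod b)) :
    (∑ᶠ A ∈ {A : Fin s → Fin n → ZMod b |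
        (∀ B ∈ P, zmodMatrixPairing A B = 1) ∧ A ≠ 0},
      ((b : ℝ) ^ dickWeightZMod A)⁻¹) =
    -1 + (Nat.card P : ℝ)⁻¹ *
      ∑ B : P, ∏ i : Fin s, ∏ j : Fin n,
        (1 + (if (B : Fin s → Fin n → ZMod b) i j = 0 then (b : ℝ) - 1 else -1) *
          ((b : ℝ) ^ (j.1 + 1))⁻¹) :=
  wafom_inversion_formula_general b s n P
end

section
/- Let b ≥ 2 and s ≥ 1 be integers and define S_s(m) as the coefficient of x^m in the formal power series ∏_{k=1}^∞ (1 + (b-1)x^k)^s, and vol_s(M) = ∑_{m=0}^M S_s(m). Then for every positive integer M, vol_s(M) ≤ exp(2√((b-1)·s·M)). -/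
open Polynomial

/-- `S_s(m)`: the coefficient of `x^m` in `∏_{k=1}^∞ (1 + (b-1)x^k)^s`
(equivalently, truncating the product at `k = m`, which does not affect
the coefficient of `x^m`). -/
noncomputable def Ssb (b s m : ℕ) : ℕ :=
  ((∏ k ∈ Finset.range m, (1 + C (b - 1) * X ^ (k + 1) : Polynomial ℕ)) ^ s).coeff m

/-- `vol_s(M) = ∑_{m=0}^M S_s(m)`. -/
noncomputable def volsb (b s M : ℕ) : ℕ := ∑ m ∈ Finset.range (M + 1), Ssb b s m

/-!
Rankin's trick. For `0 ≤ x < 1`, since all coefficients are nonnegative,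
`vol_s(M) x^M ≤ ∑_{m ≤ M} S_s(m) x^m ≤ ∏_{k=1}^{M} (1 + (b-1) x^k)^s ≤ exp (s (b-1) x / (1 - x))`,
the last step by `1 + y ≤ e^y` and the geometric series. Taking `x = e^{-t}`, for which
`x / (1 - x) = 1 / (e^t - 1) ≤ 1 / t`, gives `vol_s(M) ≤ exp ((b-1) s / t + M t)`, and
`t = √((b-1) s / M)` balances the two terms.
-/

open Finset

namespace Polynomial

theorem coeff_mul_coeff_zero_le_coeff_mul {R : Type*} [Semiring R] [PartialOrder R]
    [IsOrderedAddMonoid R] [CanonicallyOrderedAdd R] (p q : R[X]) (n : ℕ) :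
    p.coeff n * q.coeff 0 ≤ (p * q).coeff n := by
  rw [coeff_mul]
  exact single_le_sum (f := fun ij ↦ p.coeff ij.1 * q.coeff ij.2) (fun _ _ ↦ zero_le)
    (a := (n, 0)) (mem_antidiagonal.mpr (add_zero n))

theorem sum_range_coeff_mul_pow_le_eval {R : Type*} [CommSemiring R] [PartialOrder R]
    [IsOrderedRing R] {p : R[X]} (hp : ∀ n, 0 ≤ p.coeff n) {x : R} (hx : 0 ≤ x) (N : ℕ) :
    ∑ n ∈ range N, p.coeff n * x ^ n ≤ p.eval x := by
  rw [eval_eq_sum_range' (Nat.lt_succ_of_le (le_max_right N p.natDegree))]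
  exact sum_le_sum_of_subset_of_nonneg (range_subset_range.mpr (by omega))
    fun n _ _ ↦ mul_nonneg (hp n) (pow_nonneg hx n)

end Polynomial

noncomputable def dickProd (a N : ℕ) : ℕ[X] := ∏ k ∈ range N, (1 + C a * X ^ (k + 1))

theorem Ssb_eq_coeff_dickProd_pow (b s m : ℕ) :
    Ssb b s m = ((dickProd (b - 1) m) ^ s).coeff m := rfl

theorem Ssb_le_coeff_dickProd_pow (b s : ℕ) {m N : ℕ} (h : m ≤ N) :
    Ssb b s m ≤ ((dickProd (b - 1) N) ^ s).coeff m := by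
  set Q : ℕ[X] := ∏ k ∈ Ico m N, (1 + C (b - 1) * X ^ (k + 1))
  have hsplit : dickProd (b - 1) N = dickProd (b - 1) m * Q := (prod_range_mul_prod_Ico _ h).symm
  have hQ : (Q ^ s).coeff 0 = 1 := by simp [Q, coeff_zero_eq_eval_zero, eval_prod]
  simpa [Ssb_eq_coeff_dickProd_pow, hsplit, mul_pow, hQ] using
    coeff_mul_coeff_zero_le_coeff_mul (dickProd (b - 1) m ^ s) (Q ^ s) m

theorem eval_dickProd (a N : ℕ) (x : ℝ) :
    ((dickProd a N).map (Nat.castRingHom ℝ)).eval x =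
      ∏ k ∈ range N, (1 + a * x ^ (k + 1)) := by
  simp [dickProd, eval_prod, Polynomial.map_prod]

theorem prod_one_add_mul_pow_succ_le_exp {a x : ℝ} (ha : 0 ≤ a) (hx : 0 ≤ x) (hx1 : x < 1)
    (N : ℕ) :
    ∏ k ∈ range N, (1 + a * x ^ (k + 1)) ≤ Real.exp (a * (x / (1 - x))) := by
  refine (Real.prod_one_add_le_exp_sum _ fun k ↦ by positivity).trans (Real.exp_le_exp.mpr ?_)
  rw [← mul_sum]
  gcongr
  calc ∑ k ∈ range N, x ^ (k + 1) = x * ∑ k ∈ range N, x ^ k := by simp [mul_sum, pow_succ']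
    _ ≤ x * (1 / (1 - x)) := by
        gcongr
        simpa using geom_sum_Ico_le_of_lt_one (m := 0) (n := N) hx hx1
    _ = x / (1 - x) := by ring

theorem exp_neg_div_one_sub_exp_neg_le {t : ℝ} (ht : 0 < t) :
    Real.exp (-t) / (1 - Real.exp (-t)) ≤ 1 / t := by
  have hle : t ≤ Real.exp t - 1 := by linarith [Real.add_one_le_exp t]
  have h : Real.exp (-t) / (1 - Real.exp (-t)) = 1 / (Real.exp t - 1) := by
    rw [Real.exp_neg]
    field_simp
  rw [h]
  exact one_div_le_one_div_of_le ht hle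

theorem volsb_mul_pow_le_exp (b s M : ℕ) {x : ℝ} (hx : 0 ≤ x) (hx1 : x < 1) :
    (volsb b s M : ℝ) * x ^ M ≤ Real.exp (s * ((b - 1 : ℕ) * (x / (1 - x)))) := by
  set P := (dickProd (b - 1) M ^ s).map (Nat.castRingHom ℝ)
  have hP : ∀ n, P.coeff n = ((dickProd (b - 1) M ^ s).coeff n : ℝ) := fun n ↦ coeff_map _ n
  calc (volsb b s M : ℝ) * x ^ M = ∑ m ∈ range (M + 1), (Ssb b s m : ℝ) * x ^ M := by
        simp [volsb, sum_mul]
    _ ≤ ∑ m ∈ range (M + 1), P.coeff m * x ^ m := by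
        refine sum_le_sum fun m hm ↦ ?_
        have hmM : m ≤ M := Nat.lt_succ_iff.mp (mem_range.mp hm)
        refine mul_le_mul ?_ (pow_le_pow_of_le_one hx hx1.le hmM) (by positivity) (by simp [hP])
        exact hP m ▸ Nat.cast_le.mpr (Ssb_le_coeff_dickProd_pow b s hmM)
    _ ≤ P.eval x := sum_range_coeff_mul_pow_le_eval (fun n ↦ by simp [hP]) hx _
    _ = (∏ k ∈ range M, (1 + ((b - 1 : ℕ) : ℝ) * x ^ (k + 1))) ^ s := by
        simp [P, Polynomial.map_pow, eval_dickProd]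
    _ ≤ Real.exp ((b - 1 : ℕ) * (x / (1 - x))) ^ s :=
        pow_le_pow_left₀ (prod_nonneg fun k _ ↦ by positivity)
          (prod_one_add_mul_pow_succ_le_exp (by positivity) hx hx1 M) s
    _ = Real.exp (s * ((b - 1 : ℕ) * (x / (1 - x)))) := (Real.exp_nat_mul _ s).symm

theorem volsb_le_exp_div_add_mul (b s M : ℕ) {t : ℝ} (ht : 0 < t) :
    (volsb b s M : ℝ) ≤ Real.exp (s * (b - 1 : ℕ) / t + M * t) := by
  have h := volsb_mul_pow_le_exp b s M (Real.exp_pos (-t)).le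
    (Real.exp_lt_one_iff.mpr (neg_lt_zero.mpr ht))
  rw [← Real.exp_nat_mul, mul_neg, ← le_div_iff₀ (Real.exp_pos _), ← Real.exp_sub,
    sub_neg_eq_add] at h
  refine h.trans (Real.exp_le_exp.mpr ?_)
  calc (s : ℝ) * ((b - 1 : ℕ) * (Real.exp (-t) / (1 - Real.exp (-t)))) + M * t
      ≤ s * ((b - 1 : ℕ) * (1 / t)) + M * t := by
        gcongr _ * (_ * ?_) + _
        exact exp_neg_div_one_sub_exp_neg_le ht
    _ = s * (b - 1 : ℕ) / t + M * t := by ring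

theorem div_sqrt_div_add_mul_sqrt_div {a c : ℝ} (ha : 0 < a) (hc : 0 < c) :
    a / √(a / c) + c * √(a / c) = 2 * √(a * c) := by
  rw [Real.sqrt_div ha.le, Real.sqrt_mul ha.le]
  have hsa := Real.sq_sqrt ha.le
  have hsc := Real.sq_sqrt hc.le
  have : 0 < √a := Real.sqrt_pos.mpr ha
  have : 0 < √c := Real.sqrt_pos.mpr hc
  field_simp
  nlinarith

/-- Bound on the volume of the ball for the Dick weight:
`vol_s(M) ≤ exp(2√((b-1)sM))` for integers `b ≥ 2`, `s ≥ 1` and `M ≥ 1`. -/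
theorem volsb_le_exp (b s M : ℕ) (hb : 2 ≤ b) (hs : 1 ≤ s) (hM : 0 < M) :
    (volsb b s M : ℝ) ≤ Real.exp (2 * Real.sqrt ((b - 1) * s * M)) := by
  have hb' : ((b - 1 : ℕ) : ℝ) = b - 1 := by rw [Nat.cast_sub (by omega), Nat.cast_one]
  have ha : 0 < ((b - 1 : ℕ) : ℝ) * s := by
    have : 0 < b - 1 := by omega
    positivity
  have hM' : (0 : ℝ) < M := by exact_mod_cast hM
  have h := volsb_le_exp_div_add_mul b s M (Real.sqrt_pos.mpr (div_pos ha hM'))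
  rwa [mul_comm (s : ℝ), div_sqrt_div_add_mul_sqrt_div ha hM', hb'] at h
end

section
/- Let b ≥ 2, s ≥ 1 be integers and S_s(m) the coefficient of x^m in ∏_{k=1}^∞ (1 + (b-1)x^k)^s. Then for every positive integer M, S_s(M) ≤ exp(2√((b-1)·s·M)). -/
/-!
Saddle-point bound: the generating polynomial has nonnegative coefficients, so for every
`0 < x` its `M`-th coefficient is at most its value at `x` divided by `x ^ M`. Taking
`x = exp (-t)` and using `1 + y ≤ exp y`, the product is at most
`exp ((b - 1) s ∑ x ^ k) ≤ exp ((b - 1) s / t)`, whence `S_s(M) ≤ exp ((b - 1) s / t + t M)`;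
the choice `t = √((b - 1) s M) / M` balances the two terms.
-/

open Polynomial

open Finset

theorem Polynomial.coeff_mul_pow_le_eval {R : Type*} [Semiring R] [PartialOrder R]
    [IsOrderedRing R] {p : R[X]} (hp : ∀ i, 0 ≤ p.coeff i) {x : R} (hx : 0 ≤ x) (n : ℕ) :
    p.coeff n * x ^ n ≤ p.eval x := by
  rw [eval_eq_sum_range' (Nat.lt_succ_of_le (le_max_left p.natDegree n))]
  exact single_le_sum (fun i _ => mul_nonneg (hp i) (pow_nonneg hx i))
    (mem_range.2 (Nat.lt_succ_of_le (le_max_right _ _)))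

theorem Ssb_mul_pow_le (b s m : ℕ) {x : ℝ} (hx : 0 ≤ x) :
    (Ssb b s m : ℝ) * x ^ m ≤ (∏ k ∈ range m, (1 + ((b - 1 : ℕ) : ℝ) * x ^ (k + 1))) ^ s := by
  set P : ℕ[X] := (∏ k ∈ range m, (1 + C (b - 1) * X ^ (k + 1))) ^ s
  have hcoeff : ∀ i, (P.coeff i : ℝ) = (P.map (Nat.castRingHom ℝ)).coeff i := fun i => by
    rw [coeff_map, Nat.coe_castRingHom]
  calc (Ssb b s m : ℝ) * x ^ m = (P.map (Nat.castRingHom ℝ)).coeff m * x ^ m := by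
        rw [← hcoeff]; rfl
    _ ≤ (P.map (Nat.castRingHom ℝ)).eval x :=
        coeff_mul_pow_le_eval (fun i => hcoeff i ▸ Nat.cast_nonneg _) hx m
    _ = _ := by simp [P, Polynomial.map_pow, Polynomial.map_prod, eval_prod]

theorem sum_range_exp_neg_pow_succ_le_inv {t : ℝ} (ht : 0 < t) (m : ℕ) :
    ∑ k ∈ range m, Real.exp (-t) ^ (k + 1) ≤ t⁻¹ := by
  set x := Real.exp (-t)
  have hx0 : 0 < x := Real.exp_pos _
  have hx1 : x < 1 := Real.exp_lt_one_iff.2 (neg_lt_zero.2 ht)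
  have hxt : x * (t + 1) ≤ 1 := by
    calc x * (t + 1) ≤ x * Real.exp t := mul_le_mul_of_nonneg_left (Real.add_one_le_exp t) hx0.le
      _ = 1 := by rw [← Real.exp_add, neg_add_cancel, Real.exp_zero]
  calc ∑ k ∈ range m, x ^ (k + 1) = ∑ i ∈ Ico 1 (m + 1), x ^ i := by
        rw [sum_Ico_eq_sum_range]; simp [add_comm]
    _ ≤ x ^ 1 / (1 - x) := geom_sum_Ico_le_of_lt_one hx0.le hx1
    _ ≤ t⁻¹ := by
        rw [pow_one, div_le_iff₀ (sub_pos.2 hx1), inv_mul_eq_div, le_div_iff₀ ht]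
        linarith

theorem Ssb_le_exp_div_add_mul (b s m : ℕ) {t : ℝ} (ht : 0 < t) :
    (Ssb b s m : ℝ) ≤ Real.exp (((b - 1 : ℕ) : ℝ) * s / t + t * m) := by
  set c : ℝ := ((b - 1 : ℕ) : ℝ)
  set x := Real.exp (-t)
  have hprod : ∏ k ∈ range m, (1 + c * x ^ (k + 1)) ≤ Real.exp (c * t⁻¹) := by
    calc ∏ k ∈ range m, (1 + c * x ^ (k + 1)) ≤ Real.exp (∑ k ∈ range m, c * x ^ (k + 1)) :=
          Real.prod_one_add_le_exp_sum _ fun k => by positivity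
      _ ≤ Real.exp (c * t⁻¹) := by
          rw [← mul_sum]
          gcongr
          exact sum_range_exp_neg_pow_succ_le_inv ht m
  have hxm : x ^ m * Real.exp (t * m) = 1 := by
    rw [← Real.exp_nat_mul, ← Real.exp_add]; simp [mul_comm]
  calc (Ssb b s m : ℝ) = Ssb b s m * x ^ m * Real.exp (t * m) := by rw [mul_assoc, hxm, mul_one]
    _ ≤ (∏ k ∈ range m, (1 + c * x ^ (k + 1))) ^ s * Real.exp (t * m) := by
        gcongr; exact Ssb_mul_pow_le b s m (Real.exp_pos _).le
    _ ≤ Real.exp (c * t⁻¹) ^ s * Real.exp (t * m) := by gcongr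
    _ = Real.exp (c * s / t + t * m) := by
        rw [← Real.exp_nat_mul, ← Real.exp_add]; ring_nf

theorem exists_div_add_mul_eq_two_sqrt {a m : ℝ} (ha : 0 < a) (hm : 0 < m) :
    ∃ t > 0, a / t + t * m = 2 * √(a * m) := by
  have hsq : √(a * m) ^ 2 = a * m := Real.sq_sqrt (by positivity)
  refine ⟨√(a * m) / m, by positivity, ?_⟩
  field_simp
  linear_combination -hsq

/-- Bound on the sphere size for the Dick weight:
`S_s(M) ≤ exp(2√((b-1)sM))` for integers `b ≥ 2`, `s ≥ 1` and `M ≥ 1`. -/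
theorem Ssb_le_exp (b s M : ℕ) (hb : 2 ≤ b) (hs : 1 ≤ s) (hM : 0 < M) :
    (Ssb b s M : ℝ) ≤ Real.exp (2 * Real.sqrt ((b - 1) * s * M)) := by
  have hc : ((b : ℝ) - 1) = ((b - 1 : ℕ) : ℝ) := by
    rw [Nat.cast_sub (by omega), Nat.cast_one]
  have ha : (0 : ℝ) < ((b - 1 : ℕ) : ℝ) * s := by
    have : 0 < b - 1 := by omega
    positivity
  obtain ⟨t, ht, hopt⟩ := exists_div_add_mul_eq_two_sqrt ha (Nat.cast_pos.2 hM)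
  rw [hc, ← hopt]
  exact Ssb_le_exp_div_add_mul b s M ht
end

section
/- Let b ≥ 2 be an integer, s ≥ 1, c > 0 a real number, and M' a real number with M' ≥ (1+c)²·(b-1)·s/(log b)². Then ∑_{m = ⌈M'⌉}^{∞} b^{-m}·exp(2√((b-1)·s·m)) ≤ (1 + ((1+c)/c)·(1/log b))·b^{-M'}·exp(2√((b-1)·s·M')). -/
/-!
The function `x ↦ 2√(Kx)` is concave with slope `√(K/x)`, which is at most `u = log b / (1+c)`
once `x ≥ M'`. Hence beyond `M'` each unit step multiplies `b^{-x} exp(2√(Kx))` by at most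
`e^{-δ}` with `δ = log b - u = c log b / (1+c)`, so the tail is dominated by a geometric series
starting at the value at `M'`, and `(1 - e^{-δ})⁻¹ ≤ 1 + 1/δ`.
-/

open Real

/-- Tangent-line bound: `K ≤ u² x` says that the concave function `x ↦ 2√(Kx)` has slope
`√(K/x) ≤ u` at `x`. -/
theorem two_sqrt_mul_le_two_sqrt_mul_add {K u x y : ℝ} (hK : 0 ≤ K) (hu : 0 ≤ u) (hx : 0 ≤ x)
    (hKx : K ≤ u ^ 2 * x) (hxy : x ≤ y) :
    2 * √(K * y) ≤ 2 * √(K * x) + u * (y - x) := by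
  set S := √(K * x)
  have hS : 0 ≤ S := sqrt_nonneg _
  have hS2 : S ^ 2 = K * x := sq_sqrt (mul_nonneg hK hx)
  have hKS : K ≤ S * u := by
    nlinarith [mul_nonneg hS hu, mul_le_mul_of_nonneg_left hKx hK]
  have hsq : K * y ≤ (S + u * (y - x) / 2) ^ 2 := by
    nlinarith [sq_nonneg (u * (y - x)), mul_le_mul_of_nonneg_right hKS (sub_nonneg.2 hxy)]
  have hsqrt := sqrt_le_sqrt hsq
  rw [sqrt_sq (by positivity)] at hsqrt
  linarith

theorem rpow_neg_mul_exp_two_sqrt_le {b K u x y : ℝ} (hb : 0 < b) (hK : 0 ≤ K) (hu : 0 ≤ u)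
    (hx : 0 ≤ x) (hKx : K ≤ u ^ 2 * x) (hxy : x ≤ y) :
    b ^ (-y) * exp (2 * √(K * y)) ≤
      b ^ (-x) * exp (2 * √(K * x)) * exp (-(log b - u) * (y - x)) := by
  rw [rpow_def_of_pos hb, rpow_def_of_pos hb, ← exp_add, ← exp_add, ← exp_add, exp_le_exp]
  linarith [two_sqrt_mul_le_two_sqrt_mul_add hK hu hx hKx hxy]

theorem inv_pow_mul_exp_two_sqrt_le {b K u x : ℝ} (hb : 0 < b) (hK : 0 ≤ K) (hu : 0 ≤ u)
    (hub : u ≤ log b) (hx : 0 ≤ x) (hKx : K ≤ u ^ 2 * x) (k : ℕ) :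
    (b ^ (k + ⌈x⌉₊))⁻¹ * exp (2 * √(K * ↑(k + ⌈x⌉₊))) ≤
      b ^ (-x) * exp (2 * √(K * x)) * exp (-(log b - u)) ^ k := by
  have hkx : (k : ℝ) ≤ ↑(k + ⌈x⌉₊) - x := by push_cast; linarith [Nat.le_ceil x]
  rw [← rpow_natCast, ← rpow_neg hb.le, ← exp_nat_mul]
  refine (rpow_neg_mul_exp_two_sqrt_le hb hK hu hx hKx (by linarith)).trans ?_
  exact mul_le_mul_of_nonneg_left (exp_le_exp.2 (by nlinarith)) (by positivity)

theorem inv_one_sub_exp_neg_le {δ : ℝ} (hδ : 0 < δ) : (1 - exp (-δ))⁻¹ ≤ 1 + 1 / δ := by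
  have hexp : δ + 1 ≤ exp δ := add_one_le_exp δ
  have hpos : 0 < exp δ - 1 := by linarith
  have hinv : (1 - exp (-δ))⁻¹ = 1 + 1 / (exp δ - 1) := by
    rw [exp_neg]
    field_simp
    ring
  rw [hinv]
  gcongr
  linarith

theorem tsum_ite_le_of_le_geometric {F : ℕ → ℝ} {N : ℕ} {A r : ℝ}
    (hF : ∀ k, 0 ≤ F (k + N)) (hr₀ : 0 ≤ r) (hr₁ : r < 1) (hFA : ∀ k, F (k + N) ≤ A * r ^ k) :
    ∑' m, (if N ≤ m then F m else 0) ≤ (1 - r)⁻¹ * A := by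
  have hshift : ∑' k, F (k + N) = ∑' m, (if N ≤ m then F m else 0) := by
    rw [← (add_left_injective N).tsum_eq (f := fun m => if N ≤ m then F m else 0)]
    · simp
    · intro m hm
      simp only [Function.mem_support, ne_eq, ite_eq_right_iff, Classical.not_imp] at hm
      exact ⟨m - N, Nat.sub_add_cancel hm.1⟩
  have hgeom : Summable fun k => A * r ^ k :=
    (summable_geometric_of_lt_one hr₀ hr₁).mul_left A
  rw [← hshift, ← tsum_geometric_of_lt_one hr₀ hr₁, mul_comm, ← tsum_mul_left]
  exact (Summable.of_nonneg_of_le hF hFA hgeom).tsum_le_tsum hFA hgeom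

theorem tail_sum_estimate_general (b s : ℕ) (hb : 2 ≤ b) (c M' : ℝ)
    (hc : 0 < c) (hM' : (1 + c) ^ 2 * ((b : ℝ) - 1) * s / Real.log b ^ 2 ≤ M') :
    (∑' m : ℕ, if ⌈M'⌉₊ ≤ m then
        ((b : ℝ) ^ m)⁻¹ * Real.exp (2 * Real.sqrt (((b : ℝ) - 1) * s * m)) else 0) ≤
      (1 + (1 + c) / c * (1 / Real.log b)) * (b : ℝ) ^ (-M') *
        Real.exp (2 * Real.sqrt (((b : ℝ) - 1) * s * M')) := by
  have hb₁ : (1 : ℝ) < b := by exact_mod_cast hb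
  have hL : 0 < log b := log_pos hb₁
  have hK : 0 ≤ ((b : ℝ) - 1) * s := by positivity
  set u := log b / (1 + c) with hu
  have huL : u < log b := by
    rw [hu, div_lt_iff₀ (by positivity)]
    nlinarith
  have hδ_inv : 1 / (log b - u) = (1 + c) / c * (1 / log b) := by
    rw [hu]
    field_simp [hc.ne']
    ring
  have hKu : ((b : ℝ) - 1) * s ≤ u ^ 2 * M' := by
    rw [div_le_iff₀ (by positivity)] at hM'
    rw [hu, div_pow, div_mul_eq_mul_div, le_div_iff₀ (by positivity)]
    linarith
  have hM'₀ : 0 ≤ M' := le_trans (by positivity) hM'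
  calc _ ≤ (1 - exp (-(log b - u)))⁻¹ *
        ((b : ℝ) ^ (-M') * exp (2 * √(((b : ℝ) - 1) * s * M'))) :=
        tsum_ite_le_of_le_geometric (fun k => by positivity) (exp_nonneg _)
          (exp_lt_one_iff.2 (by linarith))
          (inv_pow_mul_exp_two_sqrt_le (by positivity) hK (by positivity) huL.le hM'₀ hKu)
    _ ≤ _ := by
        rw [← mul_assoc, ← hδ_inv]
        gcongr
        exact inv_one_sub_exp_neg_le (sub_pos.2 huL)

/-- **Tail estimate.** For integers `b ≥ 2`, `s ≥ 1`, a real `c > 0` and a real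
`M' ≥ (1+c)²(b-1)s/(log b)²`, one has
`∑_{m=⌈M'⌉}^∞ b^{-m} exp(2√((b-1)sm)) ≤ (1 + ((1+c)/c)(1/log b)) b^{-M'} exp(2√((b-1)sM'))`. -/
theorem tail_sum_estimate (b s : ℕ) (hb : 2 ≤ b) (hs : 1 ≤ s) (c M' : ℝ)
    (hc : 0 < c) (hM' : (1 + c) ^ 2 * ((b : ℝ) - 1) * s / Real.log b ^ 2 ≤ M') :
    (∑' m : ℕ, if ⌈M'⌉₊ ≤ m then
        ((b : ℝ) ^ m)⁻¹ * Real.exp (2 * Real.sqrt (((b : ℝ) - 1) * s * m)) else 0) ≤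
      (1 + (1 + c) / c * (1 / Real.log b)) * (b : ℝ) ^ (-M') *
        Real.exp (2 * Real.sqrt (((b : ℝ) - 1) * s * M')) :=
  tail_sum_estimate_general b s hb c M' hc hM'
end

section
/- Let G be a finite abelian group with b elements, let α_b = (log p_b)/2 where p_b is the smallest prime factor of b, and c > 0 a real number. Then for all positive integers s, n, and d with d ≥ (1+c)·(b-1)·s/(α_b·log b), there exists a subgroup P ⊆ G^{s×n} with |P| ≤ b^d such that WAFOM(P) ≤ (1 + ((1+c)/c)·(1/log b))·b^{-α_b²·d²/((b-1)s)}·e^{2·α_b·d}. -/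
open scoped Classical

/-!
Take `P` to be the image of `G^d` under `u ↦ (∑ₖ mₖᵢⱼ (uₖ))ᵢⱼ` for endomorphisms `mₖᵢⱼ` of `G`.
A character matrix `A ≠ 1` annihilates `P` iff every `mₖ` lies in the kernel of
`φ ↦ ∏ᵢⱼ Aᵢⱼ ∘ φᵢⱼ`, a nonzero homomorphism into a group of order `b`, whose kernel therefore has
index at least `p_b`. Counting the choices of `m`, any given set of fewer than `p_b^d` characters
`A ≠ 1` can be kept out of `P^⊥`. Rankin's trick with `∑_A e^{-θμ(A)} ≤ exp((b-1)s/θ)` shows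
that fewer than `p_b^d` characters `A ≠ 1` have `μ(A) ≤ t`, and bounds `∑_{μ(A) > t} b^{-μ(A)}`
by `b^{-t} e^{θt + (b-1)s/θ}`.
-/

open Finset Real

theorem exists_forall_exists_notMem_of_card_lt {β V : Type*} [Fintype V] [Nonempty V]
    (S : Finset β) (K : β → Finset V) {p d : ℕ}
    (hK : ∀ a ∈ S, p * #(K a) ≤ Fintype.card V) (hS : #S < p ^ d) :
    ∃ m : Fin d → V, ∀ a ∈ S, ∃ k, m k ∉ K a := by
  by_contra! h
  have hcover : univ ⊆ S.biUnion fun a => Fintype.piFinset fun _ : Fin d => K a := fun m _ => by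
    obtain ⟨a, ha, hm⟩ := h m
    exact mem_biUnion.2 ⟨a, ha, Fintype.mem_piFinset.2 hm⟩
  have hcount : Fintype.card V ^ d ≤ ∑ a ∈ S, #(K a) ^ d := by
    simpa [Fintype.card_piFinset] using (card_le_card hcover).trans card_biUnion_le
  refine lt_irrefl (p ^ d * Fintype.card V ^ d) ?_
  calc p ^ d * Fintype.card V ^ d ≤ ∑ a ∈ S, (p * #(K a)) ^ d := by
        simpa [mul_pow, mul_sum] using Nat.mul_le_mul_left (p ^ d) hcount
    _ ≤ ∑ _a ∈ S, Fintype.card V ^ d := sum_le_sum fun a ha => Nat.pow_le_pow_left (hK a ha) d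
    _ = #S * Fintype.card V ^ d := by rw [sum_const, smul_eq_mul]
    _ < p ^ d * Fintype.card V ^ d :=
        Nat.mul_lt_mul_of_pos_right hS (pow_pos Fintype.card_pos d)

theorem AddMonoidHom.minFac_card_mul_card_ker_le {V W : Type*} [AddGroup V] [AddGroup W]
    [Finite W] (f : V →+ W) (hf : f ≠ 0) :
    (Nat.card W).minFac * Nat.card f.ker ≤ Nat.card V := by
  have hrange : (Nat.card W).minFac ≤ Nat.card f.range := by
    refine Nat.minFac_le_of_dvd ?_ f.range.card_addSubgroup_dvd_card
    have h0 : Nat.card f.range ≠ 0 := Nat.card_pos.ne'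
    have h1 : Nat.card f.range ≠ 1 := by
      rwa [Ne, AddSubgroup.card_eq_one, AddMonoidHom.range_eq_bot_iff]
    omega
  calc (Nat.card W).minFac * Nat.card f.ker ≤ Nat.card f.range * Nat.card f.ker :=
        Nat.mul_le_mul_right _ hrange
    _ = Nat.card V := by rw [mul_comm, ← AddSubgroup.index_ker, AddSubgroup.card_mul_index]

section Rankin

variable {α : Type*} (S : Finset α) (w : α → ℝ)

theorem card_filter_le_le_exp_mul_sum {θ : ℝ} (hθ : 0 ≤ θ) (t : ℝ) :
    (#(S.filter fun x => w x ≤ t) : ℝ) ≤ exp (θ * t) * ∑ x ∈ S, exp (-(θ * w x)) := by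
  rw [card_eq_sum_ones, Nat.cast_sum, mul_sum]
  calc ∑ x ∈ S.filter (fun x => w x ≤ t), ((1 : ℕ) : ℝ)
      ≤ ∑ x ∈ S.filter (fun x => w x ≤ t), exp (θ * t) * exp (-(θ * w x)) := by
        refine sum_le_sum fun x hx => ?_
        rw [← exp_add, Nat.cast_one, one_le_exp_iff]
        nlinarith [(mem_filter.1 hx).2]
    _ ≤ ∑ x ∈ S, exp (θ * t) * exp (-(θ * w x)) :=
        sum_le_sum_of_subset_of_nonneg (filter_subset _ _) fun _ _ _ => by positivity

theorem sum_filter_lt_exp_neg_mul_le {θ L : ℝ} (hθL : θ ≤ L) (t : ℝ) :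
    ∑ x ∈ S.filter (fun x => t < w x), exp (-(L * w x)) ≤
      exp (-((L - θ) * t)) * ∑ x ∈ S, exp (-(θ * w x)) := by
  rw [mul_sum]
  calc ∑ x ∈ S.filter (fun x => t < w x), exp (-(L * w x))
      ≤ ∑ x ∈ S.filter (fun x => t < w x), exp (-((L - θ) * t)) * exp (-(θ * w x)) := by
        refine sum_le_sum fun x hx => ?_
        rw [← exp_add, exp_le_exp]
        nlinarith [(mem_filter.1 hx).2]
    _ ≤ ∑ x ∈ S, exp (-((L - θ) * t)) * exp (-(θ * w x)) :=
        sum_le_sum_of_subset_of_nonneg (filter_subset _ _) fun _ _ _ => by positivity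

end Rankin

theorem sum_range_exp_neg_mul_succ_le {θ : ℝ} (hθ : 0 < θ) (n : ℕ) :
    ∑ j ∈ range n, exp (-(θ * (j + 1))) ≤ θ⁻¹ := by
  have hz : exp (-θ) < 1 := exp_lt_one_iff.2 (neg_lt_zero.2 hθ)
  calc ∑ j ∈ range n, exp (-(θ * (j + 1))) = ∑ j ∈ Ico 1 (n + 1), exp (-θ) ^ j := by
        rw [sum_Ico_eq_sum_range, add_tsub_cancel_right]
        refine sum_congr rfl fun j _ => ?_
        rw [← exp_nat_mul]; push_cast; ring_nf
    _ ≤ exp (-θ) ^ 1 / (1 - exp (-θ)) := geom_sum_Ico_le_of_lt_one (exp_pos _).le hz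
    _ = (exp θ - 1)⁻¹ := by rw [pow_one, exp_neg]; field_simp
    _ ≤ θ⁻¹ := inv_anti₀ hθ (by linarith [add_one_le_exp θ])

theorem prod_one_add_mul_exp_neg_le {a θ : ℝ} (ha : 0 ≤ a) (hθ : 0 < θ) (n : ℕ) :
    ∏ j : Fin n, (1 + a * exp (-(θ * (j + 1)))) ≤ exp (a / θ) :=
  calc ∏ j : Fin n, (1 + a * exp (-(θ * (j + 1))))
      ≤ ∏ j : Fin n, exp (a * exp (-(θ * (j + 1)))) :=
        prod_le_prod (fun _ _ => by positivity) fun j _ => by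
          linarith [add_one_le_exp (a * exp (-(θ * (j + 1))))]
    _ = exp (a * ∑ j ∈ range n, exp (-(θ * (j + 1)))) := by
        rw [← exp_sum, mul_sum, Fin.sum_univ_eq_sum_range (fun j => a * exp (-(θ * (j + 1))))]
    _ ≤ exp (a / θ) := by
        rw [exp_le_exp, div_eq_mul_inv]
        exact mul_le_mul_of_nonneg_left (sum_range_exp_neg_mul_succ_le hθ n) ha

section DickWeight

variable {G : Type*} [AddCommGroup G] {s n : ℕ}

theorem dickWeight_one : dickWeight (1 : Fin s → Fin n → AddChar G ℂ) = 0 := by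
  simp [dickWeight]

theorem sum_exp_neg_mul_dickWeight [Fintype G] (θ : ℝ) :
    ∑ A : Fin s → Fin n → AddChar G ℂ, exp (-(θ * dickWeight A)) =
      (∏ j : Fin n, (1 + ((Fintype.card G : ℝ) - 1) * exp (-(θ * (j + 1))))) ^ s := by
  set e : Fin n → AddChar G ℂ → ℝ := fun j χ => if χ = 1 then 1 else exp (-(θ * (j + 1)))
  have hterm (A : Fin s → Fin n → AddChar G ℂ) :
      exp (-(θ * dickWeight A)) = ∏ i, ∏ j, e j (A i j) := by
    simp only [dickWeight, Nat.cast_sum, mul_sum, ← sum_neg_distrib, exp_sum]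
    refine prod_congr rfl fun i _ => prod_congr rfl fun j _ => ?_
    by_cases h : A i j = 1 <;> simp [e, h]
  have hcol (j : Fin n) :
      ∑ χ, e j χ = 1 + ((Fintype.card G : ℝ) - 1) * exp (-(θ * (j + 1))) := by
    rw [← add_sum_erase _ _ (mem_univ 1), sum_congr rfl fun χ hχ => if_neg (ne_of_mem_erase hχ),
      sum_const, card_erase_of_mem (mem_univ _), card_univ, AddChar.card_eq, nsmul_eq_mul,
      Nat.cast_pred Fintype.card_pos]
    simp [e]
  calc ∑ A : Fin s → Fin n → AddChar G ℂ, exp (-(θ * dickWeight A))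
      = ∏ _i : Fin s, ∑ row : Fin n → AddChar G ℂ, ∏ j, e j (row j) := by
        simp only [hterm, Fintype.prod_sum]
    _ = _ := by
        rw [← Fintype.prod_sum, prod_const, card_univ, Fintype.card_fin]
        simp only [hcol]

theorem sum_exp_neg_mul_dickWeight_le [Fintype G] {θ : ℝ} (hθ : 0 < θ) :
    ∑ A : Fin s → Fin n → AddChar G ℂ, exp (-(θ * dickWeight A)) ≤
      exp (((Fintype.card G : ℝ) - 1) * s / θ) := by
  have hb : (0 : ℝ) ≤ (Fintype.card G : ℝ) - 1 :=
    sub_nonneg.2 (by exact_mod_cast Fintype.card_pos)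
  rw [sum_exp_neg_mul_dickWeight, mul_comm _ (s : ℝ), mul_div_assoc, exp_nat_mul]
  exact pow_le_pow_left₀ (prod_nonneg fun _ _ => by positivity)
    (prod_one_add_mul_exp_neg_le hb hθ n) s

end DickWeight

section Construction

variable {G : Type*} [AddCommGroup G] {s n d : ℕ}

def generatorMap (m : Fin d → Fin s → Fin n → (G →+ G)) :
    (Fin d → G) →+ (Fin s → Fin n → G) :=
  AddMonoidHom.mk' (fun u i j => ∑ k, m k i j (u k)) fun u v => by
    ext i j; simp [sum_add_distrib]

theorem generatorMap_single (m : Fin d → Fin s → Fin n → (G →+ G)) (k : Fin d) (g : G)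
    (i : Fin s) (j : Fin n) : generatorMap m (Pi.single k g) i j = m k i j g := by
  simp only [generatorMap, AddMonoidHom.mk'_apply]
  rw [sum_eq_single k (fun x _ hx => by rw [Pi.single_eq_of_ne hx, map_zero]) (by simp),
    Pi.single_eq_same]

def Annihilates (A : Fin s → Fin n → AddChar G ℂ) (P : AddSubgroup (Fin s → Fin n → G)) :
    Prop :=
  ∀ B ∈ P, ∏ i, ∏ j, A i j (B i j) = 1

def charPairing (A : Fin s → Fin n → AddChar G ℂ) :
    (Fin s → Fin n → (G →+ G)) →+ Additive (AddChar G ℂ) :=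
  AddMonoidHom.mk' (fun φ => .ofMul (∏ i, ∏ j, (A i j).compAddMonoidHom (φ i j))) fun φ ψ => by
    rw [← ofMul_mul, ← prod_mul_distrib]
    congr 1
    refine prod_congr rfl fun i _ => ?_
    rw [← prod_mul_distrib]
    refine prod_congr rfl fun j _ => ?_
    ext g
    simp only [AddChar.compAddMonoidHom_apply, Pi.add_apply, AddMonoidHom.add_apply,
      AddChar.map_add_eq_mul, AddChar.mul_apply]

theorem charPairing_apply (A : Fin s → Fin n → AddChar G ℂ) (φ : Fin s → Fin n → (G →+ G))
    (g : G) : (charPairing A φ).toMul g = ∏ i, ∏ j, A i j (φ i j g) := by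
  simp [charPairing, AddChar.prod_apply]

theorem charPairing_single_apply (A : Fin s → Fin n → AddChar G ℂ) (i : Fin s) (j : Fin n)
    (f : G →+ G) (g : G) : (charPairing A (Pi.single i (Pi.single j f))).toMul g = A i j (f g) := by
  rw [charPairing_apply,
    prod_eq_single i (fun x _ hx => by simp [Pi.single_eq_of_ne hx]) (by simp),
    prod_eq_single j (fun x _ hx => by simp [Pi.single_eq_of_ne hx]) (by simp)]
  simp

theorem charPairing_ne_zero {A : Fin s → Fin n → AddChar G ℂ} (hA : A ≠ 1) :
    charPairing A ≠ 0 := by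
  contrapose! hA
  ext i j g
  simpa [charPairing_single_apply] using
    congr_arg (fun f => (f (Pi.single i (Pi.single j (AddMonoidHom.id G)))).toMul g) hA

theorem charPairing_eq_zero_of_annihilates {m : Fin d → Fin s → Fin n → (G →+ G)}
    {A : Fin s → Fin n → AddChar G ℂ} (hA : Annihilates A (generatorMap m).range) (k : Fin d) :
    charPairing A (m k) = 0 := by
  apply Additive.toMul.injective
  ext g
  simpa [charPairing_apply, generatorMap_single] using hA _ ⟨Pi.single k g, rfl⟩

theorem minFac_mul_card_ker_charPairing_le [Fintype G] [Fintype (G →+ G)]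
    {A : Fin s → Fin n → AddChar G ℂ} (hA : A ≠ 1) :
    (Fintype.card G).minFac * #(univ.filter (· ∈ (charPairing A).ker)) ≤
      Fintype.card (Fin s → Fin n → (G →+ G)) := by
  have h := (charPairing A).minFac_card_mul_card_ker_le (charPairing_ne_zero hA)
  rwa [Nat.card_congr Additive.ofMul.symm, Nat.card_eq_fintype_card, AddChar.card_eq,
    Nat.card_eq_fintype_card, Fintype.card_subtype, Nat.card_eq_fintype_card] at h

theorem exists_generatorMap_not_annihilates [Fintype G]
    (S : Finset (Fin s → Fin n → AddChar G ℂ)) (hS1 : 1 ∉ S)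
    (hS : #S < (Fintype.card G).minFac ^ d) :
    ∃ m : Fin d → Fin s → Fin n → (G →+ G), ∀ A ∈ S, ¬Annihilates A (generatorMap m).range := by
  have : Fintype (G →+ G) := .ofInjective _ DFunLike.coe_injective
  obtain ⟨m, hm⟩ := exists_forall_exists_notMem_of_card_lt S
    (fun A => univ.filter (· ∈ (charPairing A).ker))
    (fun A hA => minFac_mul_card_ker_charPairing_le (ne_of_mem_of_not_mem hA hS1)) hS
  refine ⟨m, fun A hA hann => ?_⟩
  obtain ⟨k, hk⟩ := hm A hA
  exact hk (mem_filter.2 ⟨mem_univ _, charPairing_eq_zero_of_annihilates hann k⟩)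

end Construction

section Wafom

variable {G : Type*} [AddCommGroup G] [Fintype G] {s n d : ℕ}

noncomputable def wafom (P : AddSubgroup (Fin s → Fin n → G)) : ℝ :=
  ∑ᶠ A ∈ {A | Annihilates A P ∧ A ≠ 1}, ((Fintype.card G : ℝ) ^ dickWeight A)⁻¹

theorem card_filter_dickWeight_le_le {θ : ℝ} (hθ : 0 < θ) (t : ℝ) :
    (#((univ.erase 1).filter fun A : Fin s → Fin n → AddChar G ℂ => (dickWeight A : ℝ) ≤ t) : ℝ)
      ≤ exp (θ * t) * (exp (((Fintype.card G : ℝ) - 1) * s / θ) - 1) := by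
  have h := card_filter_le_le_exp_mul_sum (univ.erase 1)
    (fun A : Fin s → Fin n → AddChar G ℂ => (dickWeight A : ℝ)) hθ.le t
  rw [sum_erase_eq_sub (mem_univ _), dickWeight_one, Nat.cast_zero, mul_zero, neg_zero,
    exp_zero] at h
  exact h.trans (by gcongr; exact sum_exp_neg_mul_dickWeight_le hθ)

theorem wafom_le_of_lt_dickWeight {P : AddSubgroup (Fin s → Fin n → G)} {θ t : ℝ} (hθ : 0 < θ)
    (hθL : θ ≤ log (Fintype.card G)) (hP : ∀ A, Annihilates A P → A ≠ 1 → t < dickWeight A) :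
    wafom P ≤ exp (-((log (Fintype.card G) - θ) * t) + ((Fintype.card G : ℝ) - 1) * s / θ) := by
  set μ : (Fin s → Fin n → AddChar G ℂ) → ℝ := fun A => dickWeight A
  have hterm (A : Fin s → Fin n → AddChar G ℂ) :
      ((Fintype.card G : ℝ) ^ dickWeight A)⁻¹ = exp (-(log (Fintype.card G) * μ A)) := by
    rw [exp_neg, mul_comm, exp_nat_mul, exp_log (by exact_mod_cast Fintype.card_pos)]
  have hhigh : {A | Annihilates A P ∧ A ≠ 1} ⊆ ↑(univ.filter fun A => t < μ A) :=
    fun A hA => by simpa using hP A hA.1 hA.2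
  calc wafom P ≤ ∑ A ∈ univ.filter (fun A => t < μ A), exp (-(log (Fintype.card G) * μ A)) := by
        rw [wafom, finsum_mem_eq_finite_toFinset_sum _ (Set.toFinite _)]
        simp only [hterm]
        exact sum_le_sum_of_subset_of_nonneg (Set.Finite.toFinset_subset.2 hhigh)
          fun A _ _ => (exp_pos _).le
    _ ≤ exp (-((log (Fintype.card G) - θ) * t)) * ∑ A, exp (-(θ * μ A)) :=
        sum_filter_lt_exp_neg_mul_le univ μ hθL t
    _ ≤ exp (-((log (Fintype.card G) - θ) * t)) * exp (((Fintype.card G : ℝ) - 1) * s / θ) := by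
        gcongr; exact sum_exp_neg_mul_dickWeight_le hθ
    _ = _ := (exp_add _ _).symm

theorem exists_addSubgroup_card_le_wafom_le {θ t : ℝ} (hθ : 0 < θ)
    (hθL : θ ≤ log (Fintype.card G))
    (hlow : exp (θ * t) * (exp (((Fintype.card G : ℝ) - 1) * s / θ) - 1) <
      (Fintype.card G).minFac ^ d) :
    ∃ P : AddSubgroup (Fin s → Fin n → G), Nat.card P ≤ Fintype.card G ^ d ∧
      wafom P ≤ exp (-((log (Fintype.card G) - θ) * t) + ((Fintype.card G : ℝ) - 1) * s / θ) := by
  obtain ⟨m, hm⟩ := exists_generatorMap_not_annihilates (d := d)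
    ((univ.erase 1).filter fun A : Fin s → Fin n → AddChar G ℂ => (dickWeight A : ℝ) ≤ t)
    (by simp) (by exact_mod_cast (card_filter_dickWeight_le_le hθ t).trans_lt hlow)
  refine ⟨(generatorMap m).range, ?_, wafom_le_of_lt_dickWeight hθ hθL fun A hA hA1 => ?_⟩
  · calc Nat.card (generatorMap m).range ≤ Nat.card (Fin d → G) :=
          Nat.card_le_card_of_surjective _ (generatorMap m).rangeRestrict_surjective
      _ = Fintype.card G ^ d := by simp
  · exact lt_of_not_ge fun hle => hm A (mem_filter.2 ⟨mem_erase.2 ⟨hA1, mem_univ _⟩, hle⟩) hA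

end Wafom

theorem exists_low_wafom_subgroup_general (G : Type*) [AddCommGroup G] [Fintype G]
    (b s n d : ℕ) (hb : b = Fintype.card G) (hb2 : 2 ≤ b) (hs : 0 < s)
    (hd : 0 < d) (c : ℝ) (hc : 0 < c)
    (hds : (1 + c) * ((b : ℝ) - 1) * s / (Real.log b.minFac / 2 * Real.log b) ≤ d) :
    ∃ P : AddSubgroup (Fin s → Fin n → G), Nat.card P ≤ b ^ d ∧
      (∑ᶠ A ∈ {A : Fin s → Fin n → AddChar G ℂ |
          (∀ B ∈ P, (∏ i : Fin s, ∏ j : Fin n, A i j (B i j)) = 1) ∧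
            A ≠ fun _ _ => 1},
        ((b : ℝ) ^ dickWeight A)⁻¹) ≤
      (1 + (1 + c) / c * (1 / Real.log b)) *
        (b : ℝ) ^ (-((Real.log b.minFac / 2) ^ 2 * d ^ 2 / (((b : ℝ) - 1) * s))) *
        Real.exp (2 * (Real.log b.minFac / 2) * d) := by
  subst hb
  set L := log (Fintype.card G)
  set α := log (Fintype.card G).minFac / 2
  set W := ((Fintype.card G : ℝ) - 1) * s
  have hL : 0 < L := log_pos (by exact_mod_cast hb2)
  have hα : 0 < α := half_pos (log_pos (by exact_mod_cast (Nat.minFac_prime (by omega)).one_lt))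
  have hW : 0 < W := mul_pos (sub_pos.2 (by exact_mod_cast hb2)) (by exact_mod_cast hs)
  have hαd : 0 < α * d := mul_pos hα (by exact_mod_cast hd)
  -- `θ = W / (α d)` and `t = (α d)² / W` make both Rankin exponents `θ t` and `W / θ` equal `α d`.
  have hθt : W / (α * d) * (α ^ 2 * d ^ 2 / W) = α * d := by field_simp
  have hWθ : W / (W / (α * d)) = α * d := by field_simp
  have hθL : W / (α * d) ≤ L := by
    rw [div_le_iff₀ (by positivity)] at hds
    rw [div_le_iff₀ hαd]
    nlinarith
  have hp : ((Fintype.card G).minFac : ℝ) ^ d = exp (α * d) * exp (α * d) := by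
    rw [← exp_add, ← two_mul, ← mul_assoc, mul_div_cancel₀ _ two_ne_zero, mul_comm, exp_nat_mul,
      exp_log (by exact_mod_cast Nat.minFac_pos _)]
  have hlow : exp (W / (α * d) * (α ^ 2 * d ^ 2 / W)) * (exp (W / (W / (α * d))) - 1) <
      ((Fintype.card G).minFac : ℝ) ^ d := by
    rw [hθt, hWθ, hp]
    exact mul_lt_mul_of_pos_left (by linarith) (exp_pos _)
  obtain ⟨P, hcard, hP⟩ := exists_addSubgroup_card_le_wafom_le (n := n) (div_pos hW hαd) hθL hlow
  refine ⟨P, hcard, hP.trans ?_⟩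
  have hfac : 1 ≤ 1 + (1 + c) / c * (1 / L) := le_add_of_nonneg_right (by positivity)
  rw [hWθ, rpow_def_of_pos (by positivity)]
  calc exp (-((L - W / (α * d)) * (α ^ 2 * d ^ 2 / W)) + α * d)
      = exp (L * -(α ^ 2 * d ^ 2 / W)) * exp (2 * α * d) := by
        rw [← exp_add]; congr 1; linarith
    _ ≤ _ := by
        rw [mul_assoc _ (exp _)]
        exact le_mul_of_one_le_left (by positivity) hfac

/-- **Existence of low-WAFOM point sets.** Let `G` be a finite abelian group with
`b` elements, `p_b` the smallest prime factor of `b`, `α_b = (log p_b)/2`, and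
`c > 0`. For all positive integers `s`, `n`, `d` with
`d ≥ (1+c)(b-1)s/(α_b log b)`, there is a subgroup `P ⊆ G^{s×n}` with `|P| ≤ b^d`
such that
`WAFOM(P) ≤ (1 + ((1+c)/c)(1/log b)) · b^{-α_b² d²/((b-1)s)} · e^{2 α_b d}`. -/
theorem exists_low_wafom_subgroup (G : Type*) [AddCommGroup G] [Fintype G]
    (b s n d : ℕ) (hb : b = Fintype.card G) (hb2 : 2 ≤ b) (hs : 0 < s) (hn : 0 < n)
    (hd : 0 < d) (c : ℝ) (hc : 0 < c)
    (hds : (1 + c) * ((b : ℝ) - 1) * s / (Real.log b.minFac / 2 * Real.log b) ≤ d) :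
    ∃ P : AddSubgroup (Fin s → Fin n → G), Nat.card P ≤ b ^ d ∧
      (∑ᶠ A ∈ {A : Fin s → Fin n → AddChar G ℂ |
          (∀ B ∈ P, (∏ i : Fin s, ∏ j : Fin n, A i j (B i j)) = 1) ∧
            A ≠ fun _ _ => 1},
        ((b : ℝ) ^ dickWeight A)⁻¹) ≤
      (1 + (1 + c) / c * (1 / Real.log b)) *
        (b : ℝ) ^ (-((Real.log b.minFac / 2) ^ 2 * d ^ 2 / (((b : ℝ) - 1) * s))) *
        Real.exp (2 * (Real.log b.minFac / 2) * d) :=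
  exists_low_wafom_subgroup_general G b s n d hb hb2 hs hd c hc hds
end
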